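/- arXiv:2605.23252 — 4 statements merged into one kernel-verified Lean document; each statement's English description precedes it below -/
import Mathlib

section
/- For every real number μ < 0 and every s ∈ (0,1), the improper integral ∫₀^∞ μ t^{s-1}/(t-μ) dt converges and equals -π csc(π s) (-μ)^s. -/
open Real MeasureTheory Set

/-! The substitution `t = a x / (1 - x)` maps `(0, 1)` onto `(0, ∞)` and turns
`∫₀^∞ t^(α-1) / (t + a)^(α+β) dt` into `a^(-β) B(α, β)`. For `α = s`, `β = 1 - s` and `a = -μ`,
Euler's reflection formula `B(s, 1 - s) = Γ(s) Γ(1 - s) = π / sin (π s)` gives the value. -/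

lemma ofReal_rpow_mul_one_sub_rpow {x : ℝ} (hx : x ∈ Icc 0 1) (α β : ℝ) :
    ((x ^ (α - 1) * (1 - x) ^ (β - 1) : ℝ) : ℂ) =
      (x : ℂ) ^ ((α : ℂ) - 1) * (1 - (x : ℂ)) ^ ((β : ℂ) - 1) := by
  rw [Complex.ofReal_mul, Complex.ofReal_cpow hx.1, Complex.ofReal_cpow (sub_nonneg.2 hx.2)]
  push_cast
  rfl

lemma integrableOn_Ioo_rpow_mul_one_sub_rpow {α β : ℝ} (hα : 0 < α) (hβ : 0 < β) :
    IntegrableOn (fun x : ℝ => x ^ (α - 1) * (1 - x) ^ (β - 1)) (Ioo 0 1) := by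
  have hB := (Complex.betaIntegral_convergent (u := α) (v := β) (by simpa) (by simpa)).1
  refine IntegrableOn.congr_fun (hB.mono_set Ioo_subset_Ioc_self).re (fun x hx => ?_)
    measurableSet_Ioo
  rw [← ofReal_rpow_mul_one_sub_rpow (Ioo_subset_Icc_self hx), RCLike.re_to_complex,
    Complex.ofReal_re]

lemma integral_Ioo_rpow_mul_one_sub_rpow {α β : ℝ} (hα : 0 < α) (hβ : 0 < β) :
    ∫ x in Ioo (0 : ℝ) 1, x ^ (α - 1) * (1 - x) ^ (β - 1) = ProbabilityTheory.beta α β := by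
  have hB := (Complex.betaIntegral_convergent (u := α) (v := β) (by simpa) (by simpa)).1
  have hre := integral_re (hB.mono_set Ioo_subset_Ioc_self)
  rw [ProbabilityTheory.beta_eq_betaIntegralReal α β hα hβ, Complex.betaIntegral,
    intervalIntegral.integral_of_le zero_le_one, integral_Ioc_eq_integral_Ioo,
    ← RCLike.re_to_complex, ← hre]
  refine setIntegral_congr_fun measurableSet_Ioo (fun x hx => ?_)
  rw [← ofReal_rpow_mul_one_sub_rpow (Ioo_subset_Icc_self hx)]
  exact (Complex.ofReal_re _).symm

lemma hasDerivAt_mul_div_one_sub (a : ℝ) {x : ℝ} (hx : x ≠ 1) :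
    HasDerivAt (fun x => a * x / (1 - x)) (a / (1 - x) ^ 2) x := by
  have hx' : 1 - x ≠ 0 := sub_ne_zero.2 hx.symm
  refine (((hasDerivAt_id' x).const_mul a).div ((hasDerivAt_id' x).const_sub 1) hx').congr_deriv
    ?_
  field_simp
  ring

lemma injOn_mul_div_one_sub {a : ℝ} (ha : a ≠ 0) : InjOn (fun x => a * x / (1 - x)) {1}ᶜ := by
  intro x hx y hy hxy
  have hx' : 1 - x ≠ 0 := sub_ne_zero.2 (Ne.symm hx)
  have hy' : 1 - y ≠ 0 := sub_ne_zero.2 (Ne.symm hy)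
  rw [div_eq_div_iff hx' hy'] at hxy
  have : a * (x - y) = 0 := by linear_combination hxy
  exact sub_eq_zero.1 ((mul_eq_zero.1 this).resolve_left ha)

lemma image_mul_div_one_sub_Ioo {a : ℝ} (ha : 0 < a) :
    (fun x => a * x / (1 - x)) '' Ioo 0 1 = Ioi 0 := by
  ext t
  simp only [mem_image, mem_Ioo, mem_Ioi]
  constructor
  · rintro ⟨x, ⟨hx0, hx1⟩, rfl⟩
    exact div_pos (mul_pos ha hx0) (sub_pos.2 hx1)
  · intro ht
    refine ⟨t / (t + a), ⟨by positivity, (div_lt_one (by positivity)).2 (by linarith)⟩, ?_⟩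
    rw [one_sub_div (by positivity), add_sub_cancel_left]
    field_simp

lemma abs_deriv_mul_rpow_div_add_rpow {a α β x : ℝ} (ha : 0 < a) (hx : x ∈ Ioo 0 1) :
    |a / (1 - x) ^ 2| * ((a * x / (1 - x)) ^ (α - 1) / (a * x / (1 - x) + a) ^ (α + β)) =
      a ^ (-β) * (x ^ (α - 1) * (1 - x) ^ (β - 1)) := by
  obtain ⟨hx0, hx1⟩ := hx
  set y := 1 - x
  have hy0 : 0 < y := sub_pos.2 hx1
  have hsum : a * x / y + a = a / y := by field_simp; ring
  have ha_pow : a ^ (α + β) = a ^ (α - 1) * a ^ β * a := by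
    rw [← rpow_add ha, ← rpow_add_one ha.ne']; ring_nf
  have hy_pow : y ^ (α + β) = y ^ (α - 1) * y ^ (β - 1) * y ^ 2 := by
    rw [← rpow_add hy0, ← rpow_natCast, ← rpow_add hy0]; push_cast; ring_nf
  rw [hsum, abs_of_pos (by positivity), div_rpow (by positivity) hy0.le, div_rpow ha.le hy0.le,
    mul_rpow ha.le hx0.le, ha_pow, hy_pow, rpow_neg ha.le]
  field_simp

section Substitution

variable {E : Type*} [NormedAddCommGroup E] [NormedSpace ℝ E] {a : ℝ}

lemma integrableOn_Ioi_iff_integrableOn_Ioo_comp_mul_div_one_sub (ha : 0 < a) (g : ℝ → E) :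
    IntegrableOn g (Ioi 0) ↔
      IntegrableOn (fun x => |a / (1 - x) ^ 2| • g (a * x / (1 - x))) (Ioo 0 1) := by
  rw [← image_mul_div_one_sub_Ioo ha]
  exact integrableOn_image_iff_integrableOn_abs_deriv_smul measurableSet_Ioo
    (fun x hx => (hasDerivAt_mul_div_one_sub a hx.2.ne).hasDerivWithinAt)
    ((injOn_mul_div_one_sub ha.ne').mono fun x hx => hx.2.ne) g

lemma integral_Ioi_eq_integral_Ioo_comp_mul_div_one_sub (ha : 0 < a) (g : ℝ → E) :
    ∫ t in Ioi 0, g t = ∫ x in Ioo 0 1, |a / (1 - x) ^ 2| • g (a * x / (1 - x)) := by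
  rw [← image_mul_div_one_sub_Ioo ha]
  exact integral_image_eq_integral_abs_deriv_smul measurableSet_Ioo
    (fun x hx => (hasDerivAt_mul_div_one_sub a hx.2.ne).hasDerivWithinAt)
    ((injOn_mul_div_one_sub ha.ne').mono fun x hx => hx.2.ne) g

end Substitution

section BetaPrime

variable {a α β : ℝ}

lemma integrableOn_Ioi_rpow_div_add_rpow (ha : 0 < a) (hα : 0 < α) (hβ : 0 < β) :
    IntegrableOn (fun t : ℝ => t ^ (α - 1) / (t + a) ^ (α + β)) (Ioi 0) := by
  rw [integrableOn_Ioi_iff_integrableOn_Ioo_comp_mul_div_one_sub ha]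
  refine IntegrableOn.congr_fun ((integrableOn_Ioo_rpow_mul_one_sub_rpow hα hβ).const_mul
    (a ^ (-β))) (fun x hx => ?_) measurableSet_Ioo
  rw [smul_eq_mul, abs_deriv_mul_rpow_div_add_rpow ha hx]

lemma integral_Ioi_rpow_div_add_rpow (ha : 0 < a) (hα : 0 < α) (hβ : 0 < β) :
    ∫ t in Ioi (0 : ℝ), t ^ (α - 1) / (t + a) ^ (α + β) =
      a ^ (-β) * ProbabilityTheory.beta α β := by
  rw [integral_Ioi_eq_integral_Ioo_comp_mul_div_one_sub ha]
  simp only [smul_eq_mul]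
  rw [setIntegral_congr_fun measurableSet_Ioo fun x hx => abs_deriv_mul_rpow_div_add_rpow ha hx,
    integral_const_mul, integral_Ioo_rpow_mul_one_sub_rpow hα hβ]

end BetaPrime

lemma beta_one_sub {s : ℝ} : ProbabilityTheory.beta s (1 - s) = π / Real.sin (π * s) := by
  rw [ProbabilityTheory.beta, add_sub_cancel, Real.Gamma_one, div_one, Real.Gamma_mul_Gamma_one_sub]

theorem balakrishnan_scalar_integral (μ s : ℝ) (hμ : μ < 0) (hs : s ∈ Set.Ioo (0:ℝ) 1) :
    IntegrableOn (fun t : ℝ => μ * t ^ (s - 1) / (t - μ)) (Set.Ioi 0) volume ∧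
    ∫ t in Set.Ioi (0:ℝ), μ * t ^ (s - 1) / (t - μ) = -π * (Real.sin (π * s))⁻¹ * (-μ) ^ s := by
  obtain ⟨hs0, hs1⟩ := hs
  have ha : 0 < -μ := neg_pos.2 hμ
  have hβ : 0 < 1 - s := sub_pos.2 hs1
  have hintegrand : (fun t : ℝ => μ * t ^ (s - 1) / (t - μ)) =
      fun t => μ * (t ^ (s - 1) / (t + -μ) ^ (s + (1 - s))) := by
    ext t
    rw [add_sub_cancel, rpow_one, ← sub_eq_add_neg, mul_div_assoc]
  rw [hintegrand]
  refine ⟨(integrableOn_Ioi_rpow_div_add_rpow ha hs0 hβ).const_mul μ, ?_⟩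
  rw [integral_const_mul, integral_Ioi_rpow_div_add_rpow ha hs0 hβ, beta_one_sub, neg_sub,
    rpow_sub_one ha.ne']
  have hμ0 : μ ≠ 0 := hμ.ne
  field_simp
end

section
/- For every real number μ < 0 and every s ∈ (0,1), the improper integral ∫₀^∞ (e^{μ t} - 1)/t^{1+s} dt converges and equals Γ(-s) (-μ)^s. -/
/-!
Integrate by parts against `(1 - exp (μ t)) t ^ (-s)`, whose derivative is
`s (exp (μ t) - 1) / t ^ (1 + s) - μ t ^ (-s) exp (μ t)`. It vanishes at `0` because
`1 - exp (μ t) = O(t)` and `s < 1`, and at `∞` because `s > 0`, so the integral is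
`-(-μ)/s` times the Gamma integral `∫ t ^ (-s) exp (μ t) = (-μ) ^ (s - 1) Γ(1 - s)`,
and `Γ(1 - s) = -s Γ(-s)`.
-/

open Real MeasureTheory Set Filter Topology

lemma abs_exp_sub_one_le_neg {x : ℝ} (hx : x ≤ 0) : |exp x - 1| ≤ -x := by
  rw [abs_sub_comm, abs_of_nonneg (sub_nonneg.mpr (exp_le_one_iff.mpr hx))]
  linarith [add_one_le_exp x]

lemma abs_exp_sub_one_le_one {x : ℝ} (hx : x ≤ 0) : |exp x - 1| ≤ 1 := by
  rw [abs_sub_comm, abs_of_nonneg (sub_nonneg.mpr (exp_le_one_iff.mpr hx))]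
  linarith [exp_pos x]

section

variable {μ s : ℝ}

lemma continuousOn_exp_mul_sub_one_div_rpow :
    ContinuousOn (fun t : ℝ => (exp (μ * t) - 1) / t ^ (1 + s)) (Ioi 0) :=
  (by fun_prop : Continuous fun t : ℝ => exp (μ * t) - 1).continuousOn.div
    (continuousOn_id.rpow_const fun _ ht => Or.inl (ne_of_gt ht))
    fun _ ht => (rpow_pos_of_pos ht _).ne'

lemma integrableOn_exp_mul_sub_one_div_rpow (hμ : μ ≤ 0) (hs₀ : 0 < s) (hs₁ : s < 1) :
    IntegrableOn (fun t : ℝ => (exp (μ * t) - 1) / t ^ (1 + s)) (Ioi 0) := by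
  rw [← Ioc_union_Ioi_eq_Ioi zero_le_one]
  refine IntegrableOn.union ?_ ?_
  · have hdom : IntegrableOn (fun t : ℝ => -μ * t ^ (-s)) (Ioc 0 1) := by
      rw [← intervalIntegrable_iff_integrableOn_Ioc_of_le zero_le_one]
      exact (intervalIntegral.intervalIntegrable_rpow' (by linarith)).const_mul _
    refine hdom.mono' ((continuousOn_exp_mul_sub_one_div_rpow.mono Ioc_subset_Ioi_self)
      |>.aestronglyMeasurable measurableSet_Ioc) ?_
    filter_upwards [ae_restrict_mem measurableSet_Ioc] with t ht
    replace ht : 0 < t := ht.1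
    have htpow : 0 < t ^ (1 + s) := rpow_pos_of_pos ht _
    rw [norm_div, norm_eq_abs, norm_of_nonneg htpow.le, div_le_iff₀ htpow, mul_assoc,
      ← rpow_add ht, neg_add_cancel_comm_assoc, rpow_one, neg_mul]
    exact abs_exp_sub_one_le_neg (mul_nonpos_of_nonpos_of_nonneg hμ ht.le)
  · have hdom : IntegrableOn (fun t : ℝ => t ^ (-(1 + s))) (Ioi 1) :=
      integrableOn_Ioi_rpow_of_lt (by linarith) one_pos
    refine hdom.mono' ((continuousOn_exp_mul_sub_one_div_rpow.mono
      (Ioi_subset_Ioi zero_le_one)).aestronglyMeasurable measurableSet_Ioi) ?_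
    filter_upwards [ae_restrict_mem measurableSet_Ioi] with t ht
    have ht0 : (0 : ℝ) < t := one_pos.trans ht
    rw [norm_div, norm_eq_abs, norm_of_nonneg (rpow_nonneg ht0.le _), rpow_neg ht0.le,
      ← one_div]
    exact div_le_div_of_nonneg_right
      (abs_exp_sub_one_le_one (mul_nonpos_of_nonpos_of_nonneg hμ ht0.le)) (rpow_nonneg ht0.le _)

lemma hasDerivAt_one_sub_exp_mul_mul_rpow_neg {t : ℝ} (ht : 0 < t) :
    HasDerivAt (fun t : ℝ => (1 - exp (μ * t)) * t ^ (-s))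
      (s * ((exp (μ * t) - 1) / t ^ (1 + s)) + -μ * (t ^ (-s) * exp (μ * t))) t := by
  have hexp : HasDerivAt (fun t : ℝ => 1 - exp (μ * t)) (-(exp (μ * t) * μ)) t :=
    (((hasDerivAt_id t).const_mul μ).exp.const_sub 1).congr_deriv (by simp)
  refine (hexp.mul (hasDerivAt_rpow_const (Or.inl ht.ne'))).congr_deriv ?_
  rw [rpow_sub ht, rpow_add ht, rpow_neg ht.le, rpow_one]
  field_simp
  ring

lemma continuousWithinAt_one_sub_exp_mul_mul_rpow_neg (hμ : μ ≤ 0) (hs : s < 1) :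
    ContinuousWithinAt (fun t : ℝ => (1 - exp (μ * t)) * t ^ (-s)) (Ici 0) 0 := by
  have hlim : Tendsto (fun t : ℝ => -μ * t ^ (1 - s)) (𝓝[Ici 0] 0) (𝓝 0) := by
    simpa [zero_rpow (by linarith : 1 - s ≠ 0)] using
      ((continuousAt_rpow_const 0 (1 - s) (Or.inr (by linarith))).const_mul (-μ)).tendsto
        |>.mono_left nhdsWithin_le_nhds
  rw [ContinuousWithinAt, mul_zero, exp_zero, sub_self, zero_mul]
  refine squeeze_zero_norm' ?_ hlim
  filter_upwards [self_mem_nhdsWithin] with t (ht : 0 ≤ t)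
  rcases ht.eq_or_lt with rfl | ht
  · simp [zero_rpow (by linarith : 1 - s ≠ 0)]
  · rw [norm_mul, norm_eq_abs, norm_of_nonneg (rpow_nonneg ht.le _), abs_sub_comm,
      sub_eq_add_neg (1 : ℝ) s, rpow_add ht, rpow_one, ← mul_assoc]
    gcongr
    rw [neg_mul]
    exact abs_exp_sub_one_le_neg (mul_nonpos_of_nonpos_of_nonneg hμ ht.le)

lemma tendsto_one_sub_exp_mul_mul_rpow_neg_atTop (hμ : μ < 0) (hs : 0 < s) :
    Tendsto (fun t : ℝ => (1 - exp (μ * t)) * t ^ (-s)) atTop (𝓝 0) := by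
  have hexp : Tendsto (fun t : ℝ => exp (μ * t)) atTop (𝓝 0) :=
    tendsto_exp_atBot.comp (tendsto_id.const_mul_atTop_of_neg hμ)
  simpa using (hexp.const_sub 1).mul (tendsto_rpow_neg_atTop hs)

lemma integrableOn_rpow_neg_mul_exp_mul (hμ : μ < 0) (hs : s < 1) :
    IntegrableOn (fun t : ℝ => t ^ (-s) * exp (μ * t)) (Ioi 0) := by
  refine (integrableOn_rpow_mul_exp_neg_mul_rpow (s := -s) (by linarith) one_pos
    (neg_pos.mpr hμ)).congr_fun (fun t ht => ?_) measurableSet_Ioi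
  simp [rpow_one]

lemma integral_rpow_neg_mul_exp_mul_Ioi (hμ : μ < 0) (hs : s < 1) :
    ∫ t in Ioi 0, t ^ (-s) * exp (μ * t) = (-μ) ^ (s - 1) * Gamma (1 - s) := by
  have h := integral_rpow_mul_exp_neg_mul_Ioi (sub_pos.mpr hs) (neg_pos.mpr hμ)
  rw [one_div, inv_rpow (neg_pos.mpr hμ).le, ← rpow_neg (neg_pos.mpr hμ).le, neg_sub] at h
  simpa using h

end

theorem bochner_scalar_integral (μ s : ℝ) (hμ : μ < 0) (hs : s ∈ Set.Ioo (0:ℝ) 1) :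
    IntegrableOn (fun t : ℝ => (Real.exp (μ * t) - 1) / t ^ (1 + s)) (Set.Ioi 0) volume ∧
    ∫ t in Set.Ioi (0:ℝ), (Real.exp (μ * t) - 1) / t ^ (1 + s) =
      Real.Gamma (-s) * (-μ) ^ s := by
  have hint := integrableOn_exp_mul_sub_one_div_rpow hμ.le hs.1 hs.2
  refine ⟨hint, ?_⟩
  have hgint := integrableOn_rpow_neg_mul_exp_mul hμ hs.2
  have hftc := integral_Ioi_of_hasDerivAt_of_tendsto
    (continuousWithinAt_one_sub_exp_mul_mul_rpow_neg hμ.le hs.2)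
    (fun t ht => hasDerivAt_one_sub_exp_mul_mul_rpow_neg ht)
    ((hint.const_mul s).add (hgint.const_mul (-μ)))
    (tendsto_one_sub_exp_mul_mul_rpow_neg_atTop hμ hs.1)
  rw [integral_add (hint.const_mul s) (hgint.const_mul (-μ)), integral_const_mul,
    integral_const_mul, integral_rpow_neg_mul_exp_mul_Ioi hμ hs.2] at hftc
  have hGamma : Gamma (1 - s) = -s * Gamma (-s) := by
    simpa [neg_add_eq_sub] using Gamma_add_one (neg_ne_zero.mpr hs.1.ne')
  rw [mul_zero, exp_zero, sub_self, zero_mul, sub_zero, hGamma, ← mul_assoc,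
    rpow_sub_one (neg_pos.mpr hμ).ne', mul_div_cancel₀ _ (neg_pos.mpr hμ).ne'] at hftc
  apply mul_left_cancel₀ hs.1.ne'
  linear_combination hftc
end

section
/- Let A = P·diag(α₁,…,α_N)·P⁻¹ and B = Q·diag(β₁,…,β_M)·Q⁻¹ be diagonalizable real matrices with all eigenvalues α_i ≤ 0, β_j ≤ 0, let s ∈ (0,1), and let U be an N×M matrix. Define, for t > 0, V(t) = the unique solution of tV - AV - VBᵀ = U, and F(t) = -A·V(t) - V(t)·Bᵀ. Then (sin(πs)/π) ∫₀^∞ F(t) t^{s-1} dt = P·[((-Λ)^{∘s}) ∘ (P⁻¹·U·(Qᵀ)⁻¹)]·Qᵀ, where Λ is the N×M matrix with entries Λ_{ij} = α_i + β_j, (·)^{∘s} denotes entrywise power and ∘ the entrywise (Hadamard) product, provided all α_i + β_j < 0 (the rows/columns with α_i + β_j = 0 contribute 0 on both sides). -/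
/-!
In the eigenbases of `A` and `B` the Sylvester equation decouples: with `C = P⁻¹ U Qᵀ⁻¹` and
`λ = α k + β l`, the `(k, l)` entry of `P⁻¹ V(t) Qᵀ⁻¹` is `C k l / (t - λ)`, so that of
`P⁻¹ F(t) Qᵀ⁻¹` is `-λ / (t - λ) * C k l`. Scaling `t` by `-λ` reduces its Mellin transform at `s`
to `∫₀^∞ t^(s-1) / (1 + t) dt`, which the substitution `t = x / (1 - x)` turns into the Beta
integral `B(s, 1 - s) = Γ(s) Γ(1 - s) = π / sin (π s)`.
-/

open Matrix Real MeasureTheory Set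

lemma integral_rpow_mul_one_sub_rpow_neg {s : ℝ} (hs0 : 0 < s) (hs1 : s < 1) :
    ∫ x in Ioo (0 : ℝ) 1, x ^ (s - 1) * (1 - x) ^ (-s) = π / sin (π * s) := by
  have hbeta : Complex.betaIntegral s (1 - s) =
      ((∫ x in (0 : ℝ)..1, x ^ (s - 1) * (1 - x) ^ (-s) : ℝ) : ℂ) := by
    rw [Complex.betaIntegral, ← intervalIntegral.integral_ofReal]
    refine intervalIntegral.integral_congr fun x hx => ?_
    rw [uIcc_of_le zero_le_one] at hx
    simp only [Complex.ofReal_mul, Complex.ofReal_cpow hx.1,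
      Complex.ofReal_cpow (sub_nonneg.2 hx.2)]
    push_cast
    ring_nf
  have hGamma := Complex.betaIntegral_eq_Gamma_mul_div s (1 - s) (by simpa) (by simpa)
  rw [hbeta, add_sub_cancel, Complex.Gamma_one, div_one, ← Complex.ofReal_one,
    ← Complex.ofReal_sub, Complex.Gamma_ofReal, Complex.Gamma_ofReal, ← Complex.ofReal_mul,
    Complex.ofReal_inj, Real.Gamma_mul_Gamma_one_sub,
    intervalIntegral.integral_of_le zero_le_one] at hGamma
  rwa [integral_Ioc_eq_integral_Ioo] at hGamma

lemma image_div_one_sub_Ioo : (fun x : ℝ => x / (1 - x)) '' Ioo 0 1 = Ioi 0 := by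
  ext y
  constructor
  · rintro ⟨x, ⟨hx0, hx1⟩, rfl⟩
    exact div_pos hx0 (sub_pos.2 hx1)
  · intro hy
    have hy1 : (0 : ℝ) < 1 + y := by rw [mem_Ioi] at hy; linarith
    refine ⟨y / (1 + y), ⟨div_pos hy hy1, (div_lt_one hy1).2 (by linarith)⟩, ?_⟩
    field_simp
    ring

lemma integral_rpow_div_one_add {s : ℝ} (hs0 : 0 < s) (hs1 : s < 1) :
    ∫ t in Ioi (0 : ℝ), t ^ (s - 1) / (1 + t) = π / sin (π * s) := by
  have hderiv : ∀ x ∈ Ioo (0 : ℝ) 1,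
      HasDerivWithinAt (fun x : ℝ => x / (1 - x)) (((1 - x) ^ 2)⁻¹) (Ioo 0 1) x := by
    intro x hx
    rw [show ((1 - x) ^ 2)⁻¹ = (1 * (1 - x) - x * -1) / (1 - x) ^ 2 by ring]
    exact ((hasDerivAt_id' x).div ((hasDerivAt_id' x).const_sub 1)
      (sub_pos.2 hx.2).ne').hasDerivWithinAt
  have hinj : InjOn (fun x : ℝ => x / (1 - x)) (Ioo 0 1) := by
    rintro a ⟨-, ha1⟩ b ⟨-, hb1⟩ hab
    rw [div_eq_div_iff (sub_pos.2 ha1).ne' (sub_pos.2 hb1).ne'] at hab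
    linarith
  rw [← image_div_one_sub_Ioo, integral_image_eq_integral_abs_deriv_smul measurableSet_Ioo
    hderiv hinj, ← integral_rpow_mul_one_sub_rpow_neg hs0 hs1]
  refine setIntegral_congr_fun measurableSet_Ioo fun x ⟨hx0, hx1⟩ => ?_
  have h1x : 0 < 1 - x := sub_pos.2 hx1
  have hpow : (1 - x) ^ (-s) = ((1 - x) ^ (s - 1) * (1 - x))⁻¹ := by
    rw [rpow_neg h1x.le, rpow_sub_one h1x.ne', div_mul_cancel₀ _ h1x.ne']
  have : (1 - x) ^ (s - 1) ≠ 0 := (rpow_pos_of_pos h1x _).ne'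
  rw [smul_eq_mul, abs_of_pos (by positivity), div_rpow hx0.le h1x.le, hpow]
  field_simp
  ring

lemma sin_pi_mul_pos {s : ℝ} (hs0 : 0 < s) (hs1 : s < 1) : 0 < sin (π * s) :=
  sin_pos_of_pos_of_lt_pi (by positivity) (by nlinarith [pi_pos])

lemma integral_neg_div_sub_mul_rpow {s : ℝ} (hs0 : 0 < s) (hs1 : s < 1) {μ : ℝ} (hμ : μ < 0) :
    ∫ t in Ioi (0 : ℝ), -μ / (t - μ) * t ^ (s - 1) = π / sin (π * s) * (-μ) ^ s := by
  obtain ⟨b, hb, rfl⟩ : ∃ b, 0 < b ∧ μ = -b := ⟨-μ, neg_pos.2 hμ, (neg_neg μ).symm⟩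
  simp only [neg_neg, sub_neg_eq_add]
  have hscale : ∀ x ∈ Ioi (0 : ℝ), b / (b * x + b) * (b * x) ^ (s - 1) =
      b ^ (s - 1) * (x ^ (s - 1) / (1 + x)) := by
    intro x hx
    have : 0 < 1 + x := by rw [mem_Ioi] at hx; linarith
    rw [mul_rpow hb.le (le_of_lt hx), show b * x + b = b * (1 + x) by ring]
    field_simp
  have hsub := integral_comp_mul_left_Ioi' (fun t => b / (t + b) * t ^ (s - 1)) 0 hb
  rw [mul_zero] at hsub
  rw [← hsub, setIntegral_congr_fun measurableSet_Ioi hscale, integral_const_mul,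
    integral_rpow_div_one_add hs0 hs1, smul_eq_mul, ← mul_assoc,
    ← rpow_one_add' hb.le (by linarith), add_sub_cancel, mul_comm]

lemma integrableOn_neg_div_sub_mul_rpow {s : ℝ} (hs0 : 0 < s) (hs1 : s < 1) {μ : ℝ} (hμ : μ < 0) :
    IntegrableOn (fun t => -μ / (t - μ) * t ^ (s - 1)) (Ioi 0) := by
  -- A non-integrable function has Bochner integral `0`.
  refine Integrable.of_integral_ne_zero ?_
  rw [integral_neg_div_sub_mul_rpow hs0 hs1 hμ]
  have := sin_pi_mul_pos hs0 hs1
  have : 0 < (-μ) ^ s := rpow_pos_of_pos (neg_pos.2 hμ) s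
  positivity

section Sylvester

variable {K : Type*} [Field K] {m n : Type*} [Fintype m] [DecidableEq m] [Fintype n]
  [DecidableEq n]

lemma sylvester_diagonal_apply {α : m → K} {β : n → K} {t : K} {W C : Matrix m n K}
    (hW : t • W - diagonal α * W - W * diagonal β = C) {i : m} {j : n}
    (h : t - (α i + β j) ≠ 0) : W i j = C i j / (t - (α i + β j)) := by
  rw [eq_div_iff h, ← hW]
  simp only [Matrix.sub_apply, Matrix.smul_apply, diagonal_mul, mul_diagonal, smul_eq_mul]
  ring

lemma sylvester_conj_eq_diagonal {A P : Matrix m m K} {B Q : Matrix n n K} {α : m → K}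
    {β : n → K}
    (hP : IsUnit P.det) (hQ : IsUnit Q.det)
    (hA : A = P * diagonal α * P⁻¹) (hB : B = Q * diagonal β * Q⁻¹) (t : K) (V : Matrix m n K) :
    P⁻¹ * (t • V - A * V - V * Bᵀ) * Qᵀ⁻¹ =
      t • (P⁻¹ * V * Qᵀ⁻¹) - diagonal α * (P⁻¹ * V * Qᵀ⁻¹) - (P⁻¹ * V * Qᵀ⁻¹) * diagonal β := by
  have hQt : IsUnit Qᵀ.det := by rwa [det_transpose]
  rw [hA, hB, transpose_mul, transpose_mul, transpose_nonsing_inv, diagonal_transpose]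
  simp only [Matrix.mul_sub, Matrix.sub_mul, Matrix.mul_smul, Matrix.smul_mul, Matrix.mul_assoc,
    nonsing_inv_mul_cancel_left _ _ hP, mul_nonsing_inv _ hQt, Matrix.mul_one]

lemma neg_mul_sub_mul_transpose_eq_of_sylvester {A P : Matrix m m K} {B Q : Matrix n n K}
    {α : m → K} {β : n → K} (hP : IsUnit P.det) (hQ : IsUnit Q.det)
    (hA : A = P * diagonal α * P⁻¹) (hB : B = Q * diagonal β * Q⁻¹) {t : K} {U V : Matrix m n K}
    (hV : t • V - A * V - V * Bᵀ = U) (ht : ∀ i j, t - (α i + β j) ≠ 0) :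
    -(A * V) - V * Bᵀ =
      P * of (fun i j => -(α i + β j) / (t - (α i + β j)) * (P⁻¹ * U * Qᵀ⁻¹) i j) * Qᵀ := by
  have hQt : IsUnit Qᵀ.det := by rwa [det_transpose]
  have hconj := sylvester_conj_eq_diagonal hP hQ hA hB t V
  rw [hV] at hconj
  have hres : -(A * V) - V * Bᵀ = U - t • V := by rw [← hV]; abel
  have hUV : U - t • V = P * (P⁻¹ * (U - t • V) * Qᵀ⁻¹) * Qᵀ := by
    simp only [← Matrix.mul_assoc, mul_nonsing_inv _ hP, Matrix.one_mul,
      nonsing_inv_mul_cancel_right _ _ hQt]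
  rw [hres, hUV]
  congr 2
  ext i j
  rw [Matrix.mul_sub, Matrix.sub_mul, Matrix.mul_smul, Matrix.smul_mul, of_apply, Matrix.sub_apply,
    Matrix.smul_apply, sylvester_diagonal_apply hconj.symm (ht i j), smul_eq_mul]
  field_simp [ht i j]
  ring

end Sylvester

lemma integral_mul_mul_apply {X 𝕜 : Type*} [MeasurableSpace X] {μ : Measure X} [RCLike 𝕜]
    {l m n o : Type*} [Fintype m] [Fintype n] (P : Matrix l m 𝕜) (G : X → m → n → 𝕜)
    (R : Matrix n o 𝕜) (hG : ∀ k l, Integrable (fun x => G x k l) μ) (i : l) (j : o) :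
    ∫ x, (P * of (G x) * R) i j ∂μ = (P * of (fun k l => ∫ x, G x k l ∂μ) * R) i j := by
  simp only [mul_apply, of_apply]
  rw [integral_finsetSum _ fun l _ => ?_]
  · refine Finset.sum_congr rfl fun l _ => ?_
    rw [integral_mul_const, integral_finsetSum _ fun k _ => (hG k l).const_mul _]
    simp only [integral_const_mul, Finset.sum_mul]
  · exact (integrable_finsetSum _ fun k _ => (hG k l).const_mul _).mul_const _

lemma const_mul_mul_of_mul_apply {R l m n o : Type*} [CommSemiring R] [Fintype m] [Fintype n]
    (c : R) (P : Matrix l m R) (G : m → n → R) (Q : Matrix n o R) (i : l) (j : o) :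
    c * (P * of G * Q) i j = (P * of (fun k l => c * G k l) * Q) i j := by
  rw [← smul_eq_mul, ← Matrix.smul_apply, ← Matrix.smul_mul, ← Matrix.mul_smul, smul_of]
  rfl

theorem balakrishnan_matrix_formula_general (N M : ℕ)
    (A P : Matrix (Fin N) (Fin N) ℝ) (B Q : Matrix (Fin M) (Fin M) ℝ)
    (α : Fin N → ℝ) (β : Fin M → ℝ)
    (hP : IsUnit P.det) (hQ : IsUnit Q.det)
    (hA : A = P * Matrix.diagonal α * P⁻¹) (hB : B = Q * Matrix.diagonal β * Q⁻¹)
    (hαβ : ∀ i j, α i + β j < 0)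
    (s : ℝ) (hs : s ∈ Set.Ioo (0:ℝ) 1)
    (U : Matrix (Fin N) (Fin M) ℝ)
    (V : ℝ → Matrix (Fin N) (Fin M) ℝ)
    (hV : ∀ t : ℝ, 0 < t → t • V t - A * V t - V t * Bᵀ = U)
    (F : ℝ → Matrix (Fin N) (Fin M) ℝ)
    (hF : ∀ t : ℝ, 0 < t → F t = -(A * V t) - V t * Bᵀ) :
    ∀ i j,
      (Real.sin (π * s) / π) * ∫ t in Ioi (0:ℝ), F t i j * t ^ (s - 1) =
        (P * Matrix.of (fun i j =>
          (-(α i + β j)) ^ s * (P⁻¹ * U * (Qᵀ)⁻¹) i j) * Qᵀ) i j := by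
  obtain ⟨hs0, hs1⟩ := hs
  intro i j
  set C := P⁻¹ * U * Qᵀ⁻¹
  have hF' : ∀ t ∈ Ioi (0 : ℝ), F t i j * t ^ (s - 1) = (P * of (fun k l =>
      -(α k + β l) / (t - (α k + β l)) * t ^ (s - 1) * C k l) * Qᵀ) i j := by
    intro t ht
    have hden : ∀ k l, t - (α k + β l) ≠ 0 := fun k l => (sub_pos.2 ((hαβ k l).trans ht)).ne'
    rw [hF t ht, neg_mul_sub_mul_transpose_eq_of_sylvester hP hQ hA hB (hV t ht) hden,
      mul_comm, const_mul_mul_of_mul_apply]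
    congr! 3
    funext k l
    ring
  rw [setIntegral_congr_fun measurableSet_Ioi hF', integral_mul_mul_apply _ _ _
    fun k l => (integrableOn_neg_div_sub_mul_rpow hs0 hs1 (hαβ k l)).mul_const (C k l)]
  simp only [integral_mul_const, integral_neg_div_sub_mul_rpow hs0 hs1 (hαβ _ _)]
  rw [const_mul_mul_of_mul_apply]
  congr! 3
  funext k l
  have := sin_pi_mul_pos hs0 hs1
  field_simp

theorem balakrishnan_matrix_formula (N M : ℕ)
    (A P : Matrix (Fin N) (Fin N) ℝ) (B Q : Matrix (Fin M) (Fin M) ℝ)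
    (α : Fin N → ℝ) (β : Fin M → ℝ)
    (hP : IsUnit P.det) (hQ : IsUnit Q.det)
    (hA : A = P * Matrix.diagonal α * P⁻¹) (hB : B = Q * Matrix.diagonal β * Q⁻¹)
    (hα : ∀ i, α i ≤ 0) (hβ : ∀ j, β j ≤ 0)
    (hαβ : ∀ i j, α i + β j < 0)
    (s : ℝ) (hs : s ∈ Set.Ioo (0:ℝ) 1)
    (U : Matrix (Fin N) (Fin M) ℝ)
    (V : ℝ → Matrix (Fin N) (Fin M) ℝ)
    (hV : ∀ t : ℝ, 0 < t → t • V t - A * V t - V t * Bᵀ = U)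
    (F : ℝ → Matrix (Fin N) (Fin M) ℝ)
    (hF : ∀ t : ℝ, 0 < t → F t = -(A * V t) - V t * Bᵀ) :
    ∀ i j,
      (Real.sin (π * s) / π) * ∫ t in Ioi (0:ℝ), F t i j * t ^ (s - 1) =
        (P * Matrix.of (fun i j =>
          (-(α i + β j)) ^ s * (P⁻¹ * U * (Qᵀ)⁻¹) i j) * Qᵀ) i j :=
  balakrishnan_matrix_formula_general N M A P B Q α β hP hQ hA hB hαβ s hs U V hV F hF
end

section
/- Let A = P·diag(α₁,…,α_N)·P⁻¹ and B = Q·diag(β₁,…,β_M)·Q⁻¹ be diagonalizable real matrices with eigenvalues α_i ≤ 0, β_j ≤ 0 and suppose α_i + β_j < 0 for all i, j. Let s ∈ (0,1) and U be N×M. Then (1/Γ(-s)) ∫₀^∞ (e^{tA}·U·e^{tBᵀ} - U) t^{-1-s} dt = P·[((-Λ)^{∘s}) ∘ (P⁻¹·U·(Qᵀ)⁻¹)]·Qᵀ, where Λ_{ij} = α_i + β_j; i.e., the Bochner-type and Balakrishnan-type matrix formulas give the same result. -/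
/-!
Writing `V = P⁻¹ U (Qᵀ)⁻¹` and `Λ k l = α k + β l`, diagonalisation gives
`e^{tA} U e^{tBᵀ} - U = P ((e^{tΛ} - 1) ∘ V) Qᵀ`, so every entry of the integral is a finite
linear combination of the scalar integrals `∫₀^∞ (e^{μt} - 1) t^{-1-s} dt` with `μ = Λ k l < 0`.
The substitution `t ↦ t / (-μ)` reduces these to `μ = -1`, and integrating by parts against
`t^{-s}` turns that case into Euler's integral `Γ(1 - s) = -s Γ(-s)`.
-/

open Matrix Real MeasureTheory Set Filter Topology

lemma one_sub_exp_mul_mem_Icc {t μ : ℝ} (ht : 0 ≤ t) (hμ : μ ≤ 0) :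
    1 - Real.exp (t * μ) ∈ Icc 0 (min (-(t * μ)) 1) := by
  have hle : Real.exp (t * μ) ≤ 1 :=
    Real.exp_le_one_iff.mpr (mul_nonpos_of_nonneg_of_nonpos ht hμ)
  exact ⟨by linarith, le_min (by linarith [Real.add_one_le_exp (t * μ)])
    (by linarith [Real.exp_pos (t * μ)])⟩

lemma integrableOn_exp_mul_sub_one_mul_rpow {μ s : ℝ} (hμ : μ < 0) (hs : s ∈ Ioo 0 1) :
    IntegrableOn (fun t : ℝ => (Real.exp (t * μ) - 1) * t ^ (-1 - s)) (Ioi 0) := by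
  have hmeas : AEStronglyMeasurable (fun t : ℝ => (Real.exp (t * μ) - 1) * t ^ (-1 - s))
      (volume.restrict (Ioi 0)) :=
    ContinuousOn.aestronglyMeasurable (by
      refine ContinuousOn.mul (by fun_prop) fun t ht => ?_
      exact (Real.continuousAt_rpow_const t _ (Or.inl (ne_of_gt ht))).continuousWithinAt)
      measurableSet_Ioi
  have hnorm : ∀ t ∈ Ioi (0 : ℝ),
      ‖(Real.exp (t * μ) - 1) * t ^ (-1 - s)‖ = (1 - Real.exp (t * μ)) * t ^ (-1 - s) := by
    intro t ht
    rw [norm_mul, Real.norm_of_nonneg (Real.rpow_nonneg (le_of_lt ht) _), Real.norm_eq_abs,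
      abs_sub_comm, abs_of_nonneg (one_sub_exp_mul_mem_Icc (le_of_lt ht) hμ.le).1]
  rw [← Ioc_union_Ioi_eq_Ioi zero_le_one]
  refine IntegrableOn.union ?_ ?_
  · have hpow : IntegrableOn (fun t : ℝ => -μ * t ^ (-s)) (Ioc 0 1) :=
      ((intervalIntegrable_iff_integrableOn_Ioc_of_le zero_le_one).mp
        (intervalIntegral.intervalIntegrable_rpow' (by linarith [hs.2]))).const_mul _
    refine hpow.mono' (hmeas.mono_set Ioc_subset_Ioi_self) ?_
    filter_upwards [ae_restrict_mem measurableSet_Ioc] with t ht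
    rw [hnorm t ht.1]
    calc (1 - Real.exp (t * μ)) * t ^ (-1 - s) ≤ -(t * μ) * t ^ (-1 - s) :=
          mul_le_mul_of_nonneg_right
            ((one_sub_exp_mul_mem_Icc ht.1.le hμ.le).2.trans (min_le_left _ _))
            (Real.rpow_nonneg ht.1.le _)
      _ = -μ * t ^ (-s) := by
          rw [show -s = (-1 - s) + 1 by ring, Real.rpow_add_one ht.1.ne']
          ring
  · have hpow : IntegrableOn (fun t : ℝ => t ^ (-1 - s)) (Ioi 1) :=
      integrableOn_Ioi_rpow_of_lt (by linarith [hs.1]) one_pos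
    refine hpow.mono' (hmeas.mono_set (Ioi_subset_Ioi zero_le_one)) ?_
    filter_upwards [ae_restrict_mem measurableSet_Ioi] with t (ht : 1 < t)
    rw [hnorm t (zero_lt_one.trans ht)]
    exact mul_le_of_le_one_left (Real.rpow_nonneg (by linarith) _)
      ((one_sub_exp_mul_mem_Icc (by linarith) hμ.le).2.trans (min_le_right _ _))

lemma tendsto_exp_neg_sub_one_mul_rpow_nhdsGT_zero {s : ℝ} (hs : s < 1) :
    Tendsto (fun t : ℝ => (Real.exp (-t) - 1) * t ^ (-s)) (𝓝[>] 0) (𝓝 0) := by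
  have hpow : Tendsto (fun t : ℝ => t ^ (1 - s)) (𝓝[>] 0) (𝓝 0) := by
    simpa [Real.zero_rpow (by linarith : 1 - s ≠ 0)] using
      ((Real.continuousAt_rpow_const 0 (1 - s) (Or.inr (by linarith))).tendsto).mono_left
        nhdsWithin_le_nhds
  refine squeeze_zero_norm' ?_ hpow
  filter_upwards [self_mem_nhdsWithin] with t (ht : 0 < t)
  have hexp := one_sub_exp_mul_mem_Icc ht.le (neg_one_lt_zero (R := ℝ)).le
  simp only [mul_neg_one, neg_neg] at hexp
  rw [norm_mul, Real.norm_of_nonneg (Real.rpow_nonneg ht.le _), Real.norm_eq_abs, abs_sub_comm,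
    abs_of_nonneg hexp.1, show 1 - s = -s + 1 by ring, Real.rpow_add_one ht.ne', mul_comm _ t]
  exact mul_le_mul_of_nonneg_right (hexp.2.trans (min_le_left _ _)) (Real.rpow_nonneg ht.le _)

theorem integral_exp_neg_sub_one_mul_rpow {s : ℝ} (hs : s ∈ Ioo 0 1) :
    ∫ t in Ioi (0 : ℝ), (Real.exp (-t) - 1) * t ^ (-1 - s) = Real.Gamma (-s) := by
  have hu : ∀ t ∈ Ioi (0 : ℝ), HasDerivAt (fun t => Real.exp (-t) - 1) (-Real.exp (-t)) t :=
    fun t _ => by simpa using ((Real.hasDerivAt_exp (-t)).comp t (hasDerivAt_neg t)).sub_const 1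
  have hv : ∀ t ∈ Ioi (0 : ℝ), HasDerivAt (fun t : ℝ => t ^ (-s)) (-s * t ^ (-1 - s)) t :=
    fun t ht => by
      simpa [show -s - 1 = -1 - s by ring] using
        Real.hasDerivAt_rpow_const (p := -s) (Or.inl (ne_of_gt ht))
  have hkernel : IntegrableOn (fun t : ℝ => (Real.exp (-t) - 1) * t ^ (-1 - s)) (Ioi 0) := by
    simpa using integrableOn_exp_mul_sub_one_mul_rpow neg_one_lt_zero hs
  have hGamma : IntegrableOn (fun t : ℝ => Real.exp (-t) * t ^ (-s)) (Ioi 0) := by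
    simpa [show 1 - s - 1 = -s by ring] using
      Real.GammaIntegral_convergent (s := 1 - s) (by linarith [hs.2])
  have hlim_top : Tendsto (fun t : ℝ => (Real.exp (-t) - 1) * t ^ (-s)) atTop (𝓝 0) := by
    simpa using (Real.tendsto_exp_neg_atTop_nhds_zero.sub_const 1).mul (tendsto_rpow_neg_atTop hs.1)
  have hparts := integral_Ioi_mul_deriv_eq_deriv_mul hu hv
    (IntegrableOn.congr_fun (hkernel.const_mul (-s)) (fun t _ => by simp only [Pi.mul_apply]; ring)
      measurableSet_Ioi)
    (by simpa [Pi.mul_def] using hGamma.neg)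
    (tendsto_exp_neg_sub_one_mul_rpow_nhdsGT_zero hs.2) hlim_top
  have hGamma_eq : ∫ t in Ioi (0 : ℝ), Real.exp (-t) * t ^ (-s) = -s * Real.Gamma (-s) := by
    rw [← Real.Gamma_add_one (by linarith [hs.1] : -s ≠ 0),
      Real.Gamma_eq_integral (by linarith [hs.2])]
    simp [show -s + 1 - 1 = -s by ring]
  have hmul :
      -s * ∫ t in Ioi (0 : ℝ), (Real.exp (-t) - 1) * t ^ (-1 - s) = -s * Real.Gamma (-s) := by
    rw [← integral_const_mul, ← hGamma_eq]
    calc ∫ t in Ioi (0 : ℝ), -s * ((Real.exp (-t) - 1) * t ^ (-1 - s))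
        = ∫ t in Ioi (0 : ℝ), (Real.exp (-t) - 1) * (-s * t ^ (-1 - s)) := by
          congr 1 with t; ring
      _ = ∫ t in Ioi (0 : ℝ), Real.exp (-t) * t ^ (-s) := by
          rw [hparts]
          simp only [neg_mul, integral_neg, sub_zero, zero_sub, neg_neg]
  exact mul_left_cancel₀ (by linarith [hs.1]) hmul

theorem integral_exp_mul_sub_one_mul_rpow {μ s : ℝ} (hμ : μ < 0) (hs : s ∈ Ioo 0 1) :
    ∫ t in Ioi (0 : ℝ), (Real.exp (t * μ) - 1) * t ^ (-1 - s) =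
      Real.Gamma (-s) * (-μ) ^ s := by
  have hc : 0 < -μ := neg_pos.mpr hμ
  have hscale :=
    integral_comp_mul_left_Ioi' (fun t : ℝ => (Real.exp (-t) - 1) * t ^ (-1 - s)) 0 hc
  have hcomp : ∀ t ∈ Ioi (0 : ℝ), (Real.exp (-(-μ * t)) - 1) * (-μ * t) ^ (-1 - s) =
      (-μ) ^ (-1 - s) * ((Real.exp (t * μ) - 1) * t ^ (-1 - s)) := fun t ht => by
    rw [Real.mul_rpow hc.le (le_of_lt ht), show -(-μ * t) = t * μ by ring]
    ring
  rw [mul_zero, integral_exp_neg_sub_one_mul_rpow hs,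
    setIntegral_congr_fun measurableSet_Ioi hcomp, integral_const_mul, smul_eq_mul, ← mul_assoc,
    ← Real.rpow_one_add' hc.le (by linarith [hs.1]), show 1 + (-1 - s) = -s by ring,
    Real.rpow_neg hc.le] at hscale
  rw [← hscale, mul_comm, mul_inv_cancel_left₀ (Real.rpow_pos_of_pos hc s).ne']

lemma Real.Gamma_neg_ne_zero_of_mem_Ioo {s : ℝ} (hs : s ∈ Ioo 0 1) : Real.Gamma (-s) ≠ 0 := by
  intro h
  have hrec := Real.Gamma_add_one (by linarith [hs.1] : -s ≠ 0)
  rw [h, mul_zero] at hrec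
  exact (Real.Gamma_pos_of_pos (by linarith [hs.2] : 0 < -s + 1)).ne' hrec

section MatrixAlgebra

variable {m n : Type*} [Fintype m] [DecidableEq m] [Fintype n] [DecidableEq n]

theorem Matrix.exp_smul_conj_diagonal (P : Matrix m m ℝ) (hP : IsUnit P) (d : m → ℝ)
    (t : ℝ) :
    NormedSpace.exp (t • (P * diagonal d * P⁻¹)) =
      P * diagonal (fun k => Real.exp (t * d k)) * P⁻¹ := by
  rw [← smul_mul_assoc, ← mul_smul_comm, exp_conj P _ hP, ← diagonal_smul, exp_diagonal]
  congr 3 with k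
  simp [← Real.exp_eq_exp_ℝ]

theorem Matrix.exp_smul_transpose_conj_diagonal (Q : Matrix n n ℝ) (hQ : IsUnit Q) (d : n → ℝ)
    (t : ℝ) :
    NormedSpace.exp (t • (Q * diagonal d * Q⁻¹)ᵀ) =
      (Qᵀ)⁻¹ * diagonal (fun l => Real.exp (t * d l)) * Qᵀ := by
  rw [← transpose_smul, exp_transpose, exp_smul_conj_diagonal Q hQ, transpose_mul, transpose_mul,
    diagonal_transpose, transpose_nonsing_inv, Matrix.mul_assoc]

theorem Matrix.conj_diagonal_mul_mul_conj_diagonal_sub {R : Type*} [CommRing R]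
    (P : Matrix m m R) (Q : Matrix n n R) (hP : IsUnit P) (hQ : IsUnit Q)
    (a : m → R) (b : n → R) (U : Matrix m n R) :
    P * diagonal a * P⁻¹ * U * (Q⁻¹ * diagonal b * Q) - U =
      P * of (fun k l => (P⁻¹ * U * Q⁻¹) k l * (a k * b l - 1)) * Q := by
  have hU : P * (P⁻¹ * U * Q⁻¹) * Q = U := by
    simp [Matrix.mul_assoc, mul_nonsing_inv_cancel_left _ _ ((isUnit_iff_isUnit_det P).mp hP),
      nonsing_inv_mul _ ((isUnit_iff_isUnit_det Q).mp hQ)]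
  generalize P⁻¹ * U * Q⁻¹ = V at hU ⊢
  subst hU
  have hentries : of (fun k l => V k l * (a k * b l - 1)) = diagonal a * V * diagonal b - V := by
    ext k l
    simp only [of_apply, sub_apply, mul_diagonal, diagonal_mul]
    ring
  rw [hentries, Matrix.mul_sub, Matrix.sub_mul]
  congr 1
  simp only [Matrix.mul_assoc, nonsing_inv_mul_cancel_left _ _ ((isUnit_iff_isUnit_det P).mp hP),
    mul_nonsing_inv_cancel_left _ _ ((isUnit_iff_isUnit_det Q).mp hQ)]

theorem Matrix.exp_smul_conj_diagonal_mul_mul_exp_smul_transpose_sub (P : Matrix m m ℝ)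
    (Q : Matrix n n ℝ) (hP : IsUnit P) (hQ : IsUnit Q) (α : m → ℝ) (β : n → ℝ)
    (U : Matrix m n ℝ) (t : ℝ) :
    NormedSpace.exp (t • (P * diagonal α * P⁻¹)) * U *
        NormedSpace.exp (t • (Q * diagonal β * Q⁻¹)ᵀ) - U =
      P * of (fun k l => (P⁻¹ * U * (Qᵀ)⁻¹) k l * (Real.exp (t * (α k + β l)) - 1)) *
        Qᵀ := by
  have hQT : IsUnit Qᵀ := (isUnit_iff_isUnit_det Qᵀ).mpr
    (by rw [det_transpose]; exact (isUnit_iff_isUnit_det Q).mp hQ)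
  rw [exp_smul_conj_diagonal P hP, exp_smul_transpose_conj_diagonal Q hQ,
    conj_diagonal_mul_mul_conj_diagonal_sub P Qᵀ hP hQT]
  simp only [mul_add, Real.exp_add]

end MatrixAlgebra

theorem Matrix.mul_of_mul_apply_mul {R ι m n κ : Type*} [CommSemiring R] [Fintype m] [Fintype n]
    (P : Matrix ι m R) (Q : Matrix n κ R) (f : m → n → R) (c : R) (i : ι) (j : κ) :
    (P * of f * Q) i j * c = (P * of (fun k l => f k l * c) * Q) i j := by
  simp only [mul_apply, of_apply, Finset.sum_mul]
  exact Finset.sum_congr rfl fun l _ => Finset.sum_congr rfl fun k _ => by ring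

theorem Matrix.integral_mul_of_mul_apply {X ι m n κ : Type*} [MeasurableSpace X] {ν : Measure X}
    [Fintype m] [Fintype n] (P : Matrix ι m ℝ) (Q : Matrix n κ ℝ) (g : m → n → X → ℝ)
    (hg : ∀ k l, Integrable (g k l) ν) (i : ι) (j : κ) :
    ∫ x, (P * of (fun k l => g k l x) * Q) i j ∂ν =
      (P * of (fun k l => ∫ x, g k l x ∂ν) * Q) i j := by
  simp only [mul_apply, of_apply, Finset.sum_mul]
  rw [integral_finsetSum _ fun l _ => integrable_finsetSum _ fun k _ =>
    ((hg k l).const_mul _).mul_const _]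
  refine Finset.sum_congr rfl fun l _ => ?_
  rw [integral_finsetSum _ fun k _ => ((hg k l).const_mul _).mul_const _]
  refine Finset.sum_congr rfl fun k _ => ?_
  rw [integral_mul_const, integral_const_mul]

theorem bochner_matrix_formula_general (N M : ℕ)
    (A P : Matrix (Fin N) (Fin N) ℝ) (B Q : Matrix (Fin M) (Fin M) ℝ)
    (α : Fin N → ℝ) (β : Fin M → ℝ)
    (hP : IsUnit P.det) (hQ : IsUnit Q.det)
    (hA : A = P * Matrix.diagonal α * P⁻¹) (hB : B = Q * Matrix.diagonal β * Q⁻¹)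
    (hαβ : ∀ i j, α i + β j < 0)
    (s : ℝ) (hs : s ∈ Set.Ioo (0:ℝ) 1)
    (U : Matrix (Fin N) (Fin M) ℝ) :
    ∀ i j,
      (1 / Real.Gamma (-s)) * ∫ t in Ioi (0:ℝ),
          (NormedSpace.exp (t • A) * U * NormedSpace.exp (t • Bᵀ) - U) i j * t ^ (-1 - s) =
        (P * Matrix.of (fun i j =>
          (-(α i + β j)) ^ s * (P⁻¹ * U * (Qᵀ)⁻¹) i j) * Qᵀ) i j := by
  intro i j
  generalize hV : P⁻¹ * U * (Qᵀ)⁻¹ = V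
  have hintegrand : ∀ t : ℝ,
      (NormedSpace.exp (t • A) * U * NormedSpace.exp (t • Bᵀ) - U) i j * t ^ (-1 - s) =
        (P * of (fun k l => V k l * ((Real.exp (t * (α k + β l)) - 1) * t ^ (-1 - s))) *
          Qᵀ) i j :=
    fun t => by
      rw [hA, hB, exp_smul_conj_diagonal_mul_mul_exp_smul_transpose_sub P Q
        ((isUnit_iff_isUnit_det P).mpr hP) ((isUnit_iff_isUnit_det Q).mpr hQ), hV,
        mul_of_mul_apply_mul]
      simp only [mul_assoc]
  have hkernel : ∀ k l,
      ∫ t in Ioi (0 : ℝ), V k l * ((Real.exp (t * (α k + β l)) - 1) * t ^ (-1 - s)) =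
        (-(α k + β l)) ^ s * V k l * Real.Gamma (-s) := fun k l => by
    rw [integral_const_mul, integral_exp_mul_sub_one_mul_rpow (hαβ k l) hs]
    ring
  simp only [hintegrand]
  rw [integral_mul_of_mul_apply P Qᵀ
      (fun k l t => V k l * ((Real.exp (t * (α k + β l)) - 1) * t ^ (-1 - s)))
      fun k l => (integrableOn_exp_mul_sub_one_mul_rpow (hαβ k l) hs).const_mul _]
  simp only [hkernel]
  rw [← mul_of_mul_apply_mul, one_div_mul_eq_div,
    mul_div_cancel_right₀ _ (Real.Gamma_neg_ne_zero_of_mem_Ioo hs)]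

theorem bochner_matrix_formula (N M : ℕ)
    (A P : Matrix (Fin N) (Fin N) ℝ) (B Q : Matrix (Fin M) (Fin M) ℝ)
    (α : Fin N → ℝ) (β : Fin M → ℝ)
    (hP : IsUnit P.det) (hQ : IsUnit Q.det)
    (hA : A = P * Matrix.diagonal α * P⁻¹) (hB : B = Q * Matrix.diagonal β * Q⁻¹)
    (hα : ∀ i, α i ≤ 0) (hβ : ∀ j, β j ≤ 0)
    (hαβ : ∀ i j, α i + β j < 0)
    (s : ℝ) (hs : s ∈ Set.Ioo (0:ℝ) 1)
    (U : Matrix (Fin N) (Fin M) ℝ) :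
    ∀ i j,
      (1 / Real.Gamma (-s)) * ∫ t in Ioi (0:ℝ),
          (NormedSpace.exp (t • A) * U * NormedSpace.exp (t • Bᵀ) - U) i j * t ^ (-1 - s) =
        (P * Matrix.of (fun i j =>
          (-(α i + β j)) ^ s * (P⁻¹ * U * (Qᵀ)⁻¹) i j) * Qᵀ) i j :=
  bochner_matrix_formula_general N M A P B Q α β hP hQ hA hB hαβ s hs U
end
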